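/- Let α and β be standard Borel measurable spaces, let ρ and σ be probability measures on α, let η be a Markov kernel from α to β (the true conditional distribution of the missing coordinates given the observed ones), and let κ be any Markov kernel from α to β (an imputation's conditional distribution). Then klDiv(ρ ⊗ₘ η, σ ⊗ₘ η) ≤ klDiv(ρ ⊗ₘ κ, σ ⊗ₘ η). (Pattern-level version of Proposition 4.1: among all imputation distributions with the correct distribution of the observed part, imputing from the true conditional distribution minimizes the Kullback–Leibler divergence to the distribution of fully observed cases; hence the density ratio I-Score is a proper imputation score.) -/

import Mathlib

open MeasureTheory ProbabilityTheory Real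
open scoped ENNReal NNReal ProbabilityTheory Classical

/-- Kullback–Leibler divergence of `μ` with respect to `ν`: `∫ log (dμ/dν) dμ` if `μ ≪ ν` and
the log-likelihood ratio is integrable, and `∞` otherwise. -/
noncomputable def klDiv {α : Type*} [MeasurableSpace α] (μ ν : Measure α) : ℝ≥0∞ :=
  if μ ≪ ν ∧ Integrable (llr μ ν) μ then ENNReal.ofReal (∫ x, llr μ ν x ∂μ) else ∞

/-! The true kernel leaves only the divergence `klDiv ρ σ` of the observed marginals, while by the
chain rule any other kernel adds the nonnegative conditional divergence `klDiv (ρ ⊗ₘ κ) (ρ ⊗ₘ η)`. -/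

-- Mathlib's divergence adds the correction term `ν.real univ - μ.real univ`.
lemma klDiv_eq_informationTheory_klDiv {α : Type*} [MeasurableSpace α] {μ ν : Measure α}
    (h : μ Set.univ = ν Set.univ) : klDiv μ ν = InformationTheory.klDiv μ ν := by
  by_cases hc : μ ≪ ν ∧ Integrable (llr μ ν) μ
  · rw [klDiv, if_pos hc, InformationTheory.klDiv_of_ac_of_integrable hc.1 hc.2,
      measureReal_def, measureReal_def, h, add_sub_cancel_right]
  · rw [klDiv, if_neg hc, eq_comm, InformationTheory.klDiv_eq_top_iff]
    exact fun hac hint ↦ hc ⟨hac, hint⟩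

theorem klDiv_compProd_true_kernel_le_general {α β : Type*}
    [MeasurableSpace α] [MeasurableSpace β]
    (ρ σ : Measure α) [IsProbabilityMeasure ρ] [IsProbabilityMeasure σ]
    (η κ : Kernel α β) [IsMarkovKernel η] [IsMarkovKernel κ] :
    klDiv (ρ ⊗ₘ η) (σ ⊗ₘ η) ≤ klDiv (ρ ⊗ₘ κ) (σ ⊗ₘ η) := by
  rw [klDiv_eq_informationTheory_klDiv (by simp), klDiv_eq_informationTheory_klDiv (by simp),
    InformationTheory.klDiv_compProd_left, InformationTheory.klDiv_compProd_eq_add]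
  exact le_self_add

theorem klDiv_compProd_true_kernel_le {α β : Type*}
    [MeasurableSpace α] [StandardBorelSpace α] [MeasurableSpace β] [StandardBorelSpace β]
    (ρ σ : Measure α) [IsProbabilityMeasure ρ] [IsProbabilityMeasure σ]
    (η κ : Kernel α β) [IsMarkovKernel η] [IsMarkovKernel κ] :
    klDiv (ρ ⊗ₘ η) (σ ⊗ₘ η) ≤ klDiv (ρ ⊗ₘ κ) (σ ⊗ₘ η) :=
  klDiv_compProd_true_kernel_le_general ρ σ η κ
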